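/- Fix μ₁ < μ₂ in [0,1], Bernoulli KL divergence kl, and define KL*(μ₁,μ₂) = kl(μ₁, (μ₁+μ₂)/2) + kl(μ₂, (μ₁+μ₂)/2). Let B ⊆ ([0,1]²) be the set {(λ₁,λ₂) : λ₁ ≥ λ₂}. Then inf_{(λ₁,λ₂) ∈ B} [kl(μ₁,λ₁) + kl(μ₂,λ₂)] = KL*(μ₁,μ₂) > 0. -/

import Mathlib

/-!
Write `kl(μ, λ) = φ(μ, μ) - φ(μ, λ)` with `φ(μ, λ) = μ log λ + (1 - μ) log (1 - λ)` (`bernLogLik`),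
which is affine in `μ`. For `μ₁ ≤ μ₂` and `λ₂ ≤ λ₁`, `φ` is supermodular, so swapping `λ₁` and `λ₂`
can only increase `φ(μ₁, λ₁) + φ(μ₂, λ₂)`; averaging the two assignments reduces the problem to
`λ₁ = λ₂ = λ`, where `φ(μ₁, λ) + φ(μ₂, λ) = 2 φ(m, λ)` with `m = (μ₁ + μ₂)/2`, which is maximal at
`λ = m` by Gibbs' inequality. Interior points suffice, since `kl = ∞` whenever `λ₂ = 0` or `λ₁ = 1`.
-/

/-- Bernoulli KL divergence `kl(p,q)`, with values in `EReal`: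
`kl(p,q) = +∞` when `q ∈ {0,1}` and `p ≠ q`, and the convention `0·log 0 = 0`. -/
noncomputable def klBern (p q : ℝ) : EReal :=
  if p = q then 0
  else if q = 0 ∨ q = 1 then ⊤
  else ((p * Real.log (p / q) + (1 - p) * Real.log ((1 - p) / (1 - q)) : ℝ) : EReal)

open Real Set

noncomputable def bernLogLik (p q : ℝ) : ℝ := p * log q + (1 - p) * log (1 - q)

theorem bernLogLik_add_bernLogLik (p₁ p₂ q : ℝ) :
    bernLogLik p₁ q + bernLogLik p₂ q = 2 * bernLogLik ((p₁ + p₂) / 2) q := by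
  unfold bernLogLik
  ring

theorem bernLogLik_lt_self {p q : ℝ} (hp : p ∈ Icc (0 : ℝ) 1) (hq : q ∈ Ioo (0 : ℝ) 1)
    (hpq : p ≠ q) : bernLogLik p q < bernLogLik p p := by
  obtain rfl | hp₀ := hp.1.eq_or_lt
  · simpa [bernLogLik] using log_neg (by linarith [hq.2]) (by linarith [hq.1])
  obtain rfl | hp₁ := hp.2.eq_or_lt
  · simpa [bernLogLik] using log_neg hq.1 hq.2
  have hq₁ : 0 < 1 - q := by linarith [hq.2]
  have hp₁' : 0 < 1 - p := by linarith
  have h₁ : log q - log p < q / p - 1 := by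
    rw [← log_div hq.1.ne' hp₀.ne']
    refine log_lt_sub_one_of_pos (div_pos hq.1 hp₀) ?_
    rwa [ne_eq, div_eq_one_iff_eq hp₀.ne', eq_comm]
  have h₂ : log (1 - q) - log (1 - p) ≤ (1 - q) / (1 - p) - 1 := by
    rw [← log_div hq₁.ne' hp₁'.ne']
    exact log_le_sub_one_of_pos (div_pos hq₁ hp₁')
  have hsum : p * (q / p - 1) + (1 - p) * ((1 - q) / (1 - p) - 1) = 0 := by
    field_simp
    ring
  unfold bernLogLik
  linarith [mul_lt_mul_of_pos_left h₁ hp₀, mul_le_mul_of_nonneg_left h₂ hp₁'.le]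

theorem bernLogLik_le_self {p q : ℝ} (hp : p ∈ Icc (0 : ℝ) 1) (hq : q ∈ Ioo (0 : ℝ) 1) :
    bernLogLik p q ≤ bernLogLik p p := by
  obtain rfl | hpq := eq_or_ne p q
  · exact le_rfl
  · exact (bernLogLik_lt_self hp hq hpq).le

theorem bernLogLik_add_le_add_swap {p₁ p₂ q₁ q₂ : ℝ} (hp : p₁ ≤ p₂) (hq₂ : 0 < q₂)
    (hq : q₂ ≤ q₁) (hq₁ : q₁ < 1) :
    bernLogLik p₁ q₁ + bernLogLik p₂ q₂ ≤ bernLogLik p₁ q₂ + bernLogLik p₂ q₁ := by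
  have hlog : log q₂ ≤ log q₁ := log_le_log hq₂ hq
  have hlog' : log (1 - q₁) ≤ log (1 - q₂) := log_le_log (by linarith) (by linarith)
  have hgap : bernLogLik p₁ q₂ + bernLogLik p₂ q₁ - (bernLogLik p₁ q₁ + bernLogLik p₂ q₂)
      = (p₂ - p₁) * ((log q₁ - log q₂) + (log (1 - q₂) - log (1 - q₁))) := by
    unfold bernLogLik
    ring
  linarith [mul_nonneg (sub_nonneg.2 hp) (add_nonneg (sub_nonneg.2 hlog) (sub_nonneg.2 hlog'))]

theorem bernLogLik_add_le_midpoint {p₁ p₂ q₁ q₂ : ℝ} (hp : p₁ ≤ p₂)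
    (hm : (p₁ + p₂) / 2 ∈ Icc (0 : ℝ) 1) (hq₂ : 0 < q₂) (hq : q₂ ≤ q₁) (hq₁ : q₁ < 1) :
    bernLogLik p₁ q₁ + bernLogLik p₂ q₂ ≤
      bernLogLik p₁ ((p₁ + p₂) / 2) + bernLogLik p₂ ((p₁ + p₂) / 2) := by
  have hswap := bernLogLik_add_le_add_swap hp hq₂ hq hq₁
  have hgibbs₁ := bernLogLik_le_self hm ⟨hq₂.trans_le hq, hq₁⟩
  have hgibbs₂ := bernLogLik_le_self hm ⟨hq₂, hq.trans_lt hq₁⟩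
  have hmid := bernLogLik_add_bernLogLik p₁ p₂
  linarith [hmid q₁, hmid q₂, hmid ((p₁ + p₂) / 2)]

theorem mul_log_div_eq (x : ℝ) {y : ℝ} (hy : y ≠ 0) : x * log (x / y) = x * log x - x * log y := by
  obtain rfl | hx := eq_or_ne x 0
  · simp
  · rw [log_div hx hy, mul_sub]

theorem klBern_eq_sub (p : ℝ) {q : ℝ} (hq : q ∈ Ioo (0 : ℝ) 1) :
    klBern p q = ((bernLogLik p p - bernLogLik p q : ℝ) : EReal) := by
  have hq₀ : q ≠ 0 := hq.1.ne'
  have hq₁ : 1 - q ≠ 0 := by linarith [hq.2]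
  unfold klBern
  split_ifs with hpq hq01
  · simp [hpq]
  · rcases hq01 with rfl | rfl <;> simp at hq
  · rw [mul_log_div_eq p hq₀, mul_log_div_eq (1 - p) hq₁]
    unfold bernLogLik
    ring_nf

theorem klBern_eq_top {p q : ℝ} (hq : q = 0 ∨ q = 1) (hpq : p ≠ q) : klBern p q = ⊤ := by
  simp [klBern, hpq, hq]

theorem klBern_ne_bot (p q : ℝ) : klBern p q ≠ ⊥ := by
  unfold klBern
  split_ifs
  exacts [EReal.zero_ne_bot, top_ne_bot, EReal.coe_ne_bot _]

theorem klBern_pos {p q : ℝ} (hp : p ∈ Icc (0 : ℝ) 1) (hq : q ∈ Ioo (0 : ℝ) 1) (hpq : p ≠ q) :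
    0 < klBern p q := by
  rw [klBern_eq_sub p hq, EReal.coe_pos, sub_pos]
  exact bernLogLik_lt_self hp hq hpq

theorem klBern_midpoint_add_le {μ₁ μ₂ q₁ q₂ : ℝ} (h₁ : μ₁ ∈ Icc (0 : ℝ) 1)
    (h₂ : μ₂ ∈ Icc (0 : ℝ) 1) (h : μ₁ < μ₂) (hq₂ : 0 ≤ q₂) (hq : q₂ ≤ q₁) (hq₁ : q₁ ≤ 1) :
    klBern μ₁ ((μ₁ + μ₂) / 2) + klBern μ₂ ((μ₁ + μ₂) / 2) ≤ klBern μ₁ q₁ + klBern μ₂ q₂ := by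
  have hm : (μ₁ + μ₂) / 2 ∈ Ioo (0 : ℝ) 1 := ⟨by linarith [h₁.1], by linarith [h₂.2]⟩
  obtain rfl | hq₂ := hq₂.eq_or_lt
  · rw [klBern_eq_top (Or.inl rfl) (by linarith [h₁.1]),
      EReal.add_top_of_ne_bot (klBern_ne_bot _ _)]
    exact le_top
  obtain rfl | hq₁ := hq₁.eq_or_lt
  · rw [klBern_eq_top (Or.inr rfl) (by linarith [h₂.2]),
      EReal.top_add_of_ne_bot (klBern_ne_bot _ _)]
    exact le_top
  rw [klBern_eq_sub _ hm, klBern_eq_sub _ hm, klBern_eq_sub _ ⟨hq₂.trans_le hq, hq₁⟩,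
    klBern_eq_sub _ ⟨hq₂, hq.trans_lt hq₁⟩, ← EReal.coe_add, ← EReal.coe_add,
    EReal.coe_le_coe_iff]
  linarith [bernLogLik_add_le_midpoint h.le (Ioo_subset_Icc_self hm) hq₂ hq hq₁]

/-- The infimum of `kl(μ₁,λ₁) + kl(μ₂,λ₂)` over `{(λ₁,λ₂) ∈ [0,1]² : λ₁ ≥ λ₂}` equals
`KL*(μ₁,μ₂) = kl(μ₁,(μ₁+μ₂)/2) + kl(μ₂,(μ₁+μ₂)/2)`, which is positive when `μ₁ < μ₂`. -/
theorem klBern_inf_eq_KLstar_pos (μ₁ μ₂ : ℝ) (h₁ : μ₁ ∈ Set.Icc (0:ℝ) 1)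
    (h₂ : μ₂ ∈ Set.Icc (0:ℝ) 1) (h : μ₁ < μ₂) :
    (⨅ p : {p : ℝ × ℝ // p.1 ∈ Set.Icc (0:ℝ) 1 ∧ p.2 ∈ Set.Icc (0:ℝ) 1 ∧ p.2 ≤ p.1},
        klBern μ₁ p.1.1 + klBern μ₂ p.1.2)
      = klBern μ₁ ((μ₁ + μ₂) / 2) + klBern μ₂ ((μ₁ + μ₂) / 2) ∧
    0 < klBern μ₁ ((μ₁ + μ₂) / 2) + klBern μ₂ ((μ₁ + μ₂) / 2) := by
  have hm : (μ₁ + μ₂) / 2 ∈ Ioo (0 : ℝ) 1 := ⟨by linarith [h₁.1], by linarith [h₂.2]⟩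
  have hmIcc := Ioo_subset_Icc_self hm
  refine ⟨le_antisymm ?_ ?_, ?_⟩
  · exact iInf_le_of_le ⟨((μ₁ + μ₂) / 2, (μ₁ + μ₂) / 2), hmIcc, hmIcc, le_rfl⟩ le_rfl
  · exact le_iInf fun l ↦ klBern_midpoint_add_le h₁ h₂ h l.2.2.1.1 l.2.2.2 l.2.1.2
  · exact EReal.add_pos (klBern_pos h₁ hm (by linarith)) (klBern_pos h₂ hm (by linarith))
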